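/- Let G = (V, E) be a directed graph, s, t ∈ V, and k ∈ ℕ with the property that G has no simple path from s to t of length at least k that is strictly shorter than some given simple path p from s to t of length r ≥ k. Suppose p = P · e · R · e' · Q where P is the prefix of length k ending at node v_k, Q is the suffix of length k, and R is the middle part, and suppose P' is a simple path from s to v_k of length k that is node-disjoint from Q. Then P' is also node-disjoint from R, and hence P' · e · R · e' · Q is a simple path from s to t of length r. -/

import Mathlib

/-!
Were `P'` to meet `R`, follow `P'` up to its first node `x` on `p.drop (k + 1)` and continue
along `p` from `x`. By the choice of `x` this is again a simple `s`–`t` path. It drops at least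
the edge `e`, so it is strictly shorter than `p`; and since `P'` avoids `Q`, the node `x` comes
before `Q`, so all of `Q` is kept and the length stays at least `k`. This contradicts the
minimality of `p`.
-/

def IsSimplePath {V : Type*} (E : V → V → Prop) (s t : V) (q : List V) : Prop :=
  q.IsChain E ∧ q.head? = some s ∧ q.getLast? = some t ∧ q.Nodup

namespace List

variable {α : Type*}

theorem exists_eq_append_cons_of_not_disjoint {a b : List α} (h : ¬ a.Disjoint b) :
    ∃ a₁ x a₂, a = a₁ ++ x :: a₂ ∧ x ∈ b ∧ a₁.Disjoint b := by
  induction a with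
  | nil => simp at h
  | cons y a ih =>
    by_cases hy : y ∈ b
    · exact ⟨[], y, a, rfl, hy, by simp⟩
    · obtain ⟨a₁, x, a₂, rfl, hx, ha₁⟩ := ih (fun hd => h (disjoint_cons_left.2 ⟨hy, hd⟩))
      exact ⟨y :: a₁, x, a₂, rfl, hx, disjoint_cons_left.2 ⟨hy, ha₁⟩⟩

theorem IsChain.splice {R : α → α → Prop} {a₁ a₂ b₁ b₂ : List α} {x : α}
    (ha : IsChain R (a₁ ++ x :: a₂)) (hb : IsChain R (b₁ ++ x :: b₂)) :
    IsChain R (a₁ ++ x :: b₂) := by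
  have h₁ : IsChain R (a₁ ++ [x]) := ha.prefix (by simp)
  have h₂ : IsChain R ([x] ++ b₂) := hb.suffix (by simp)
  simpa using h₁.append_overlap h₂ (cons_ne_nil x [])

end List

namespace IsSimplePath

variable {V : Type*} {E : V → V → Prop} {s t u v x : V} {a b c a₁ a₂ b₁ b₂ p : List V}

theorem drop (hp : IsSimplePath E s t p) {i : ℕ} (hi : i < p.length) :
    IsSimplePath E p[i] t (p.drop i) :=
  ⟨hp.1.drop i, by simp [List.head?_drop, hi], by simp [List.getLast?_drop, hi, hp.2.2.1],
    hp.2.2.2.sublist (List.drop_sublist _ _)⟩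

theorem append (ha : IsSimplePath E s u a) (hb : IsSimplePath E v t b) (huv : E u v)
    (hab : a.Disjoint b) : IsSimplePath E s t (a ++ b) := by
  obtain ⟨ha, has, hau, ha'⟩ := ha
  obtain ⟨hb, hbv, hbt, hb'⟩ := hb
  refine ⟨ha.append hb ?_, ?_, ?_, List.nodup_append'.2 ⟨ha', hb', hab⟩⟩
  · simp_all
  · simp [List.head?_append, has]
  · simp [List.getLast?_append, hbt]

theorem splice (ha : IsSimplePath E s u (a₁ ++ x :: a₂))
    (hb : IsSimplePath E v t (b₁ ++ x :: b₂)) (hab : a₁.Disjoint (b₁ ++ x :: b₂)) :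
    IsSimplePath E s t (a₁ ++ x :: b₂) := by
  obtain ⟨ha, has, -, ha'⟩ := ha
  obtain ⟨hb, -, hbt, hb'⟩ := hb
  refine ⟨ha.splice hb, ?_, ?_, List.nodup_append'.2 ⟨?_, ?_, ?_⟩⟩
  · simpa [List.head?_append] using has
  · simpa [List.getLast?_append] using hbt
  · exact ha'.sublist (List.sublist_append_left _ _)
  · exact hb'.sublist (List.sublist_append_right _ _)
  · exact (List.disjoint_append_right.1 hab).2

theorem disjoint_of_forall_le_length {L n : ℕ}
    (hmin : ∀ q, IsSimplePath E s t q → L ≤ q.length → n ≤ q.length)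
    (ha : IsSimplePath E s u a) (hbc : IsSimplePath E v t (b ++ c)) (hac : a.Disjoint c)
    (hL : L ≤ c.length + 1) (hn : a.length + (b ++ c).length ≤ n) : a.Disjoint b := by
  by_contra hab
  obtain ⟨a₁, x, a₂, rfl, hxb, ha₁b⟩ := List.exists_eq_append_cons_of_not_disjoint hab
  obtain ⟨b₁, b₂, rfl⟩ := List.append_of_mem hxb
  have ha₁c : a₁.Disjoint c := List.disjoint_of_subset_left (by simp) hac
  have hq := ha.splice (b₁ := b₁) (b₂ := b₂ ++ c) (by simpa using hbc)
    (by simpa using List.disjoint_append_right.2 ⟨ha₁b, ha₁c⟩)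
  have := hmin _ hq (by simp only [List.length_append, List.length_cons]; omega)
  simp only [List.length_append, List.length_cons, List.append_assoc, List.cons_append] at this hn
  omega

end IsSimplePath

/-- Exchange step in the analysis of shortest long simple paths.  Let `p` be a
shortest simple path from `s` to `t` among those of length at least `k`, of length
`r > 2k + 1`, decomposed as `P · e · R · e' · Q` with `|P| = |Q| = k`.  If `P'` is a
simple path from `s` to the node `v_k = p[k]` of length `k` that is node-disjoint
from `Q`, then `P'` is also node-disjoint from `R`, and `P' · e · R · e' · Q` is a
simple path from `s` to `t` of length `r`.  Paths are represented by their node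
lists; `P' · e · R · e' · Q` is `P' ++ p.drop (k + 1)`. -/
theorem exchange_prefix_of_shortest_long_simple_path {V : Type*}
    (E : V → V → Prop) (s t : V) (k r : ℕ) (p : List V)
    (hpath : List.Chain' E p) (hhead : p.head? = some s) (hlast : p.getLast? = some t)
    (hnodup : p.Nodup) (hlen : p.length = r + 1) (hkr : 2 * k + 1 < r)
    (hmin : ∀ q : List V, List.Chain' E q → q.head? = some s → q.getLast? = some t →
      q.Nodup → k + 1 ≤ q.length → p.length ≤ q.length)
    (P' : List V)
    (hP'path : List.Chain' E P') (hP'head : P'.head? = some s)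
    (hP'last : P'.getLast? = p[k]?) (hP'nodup : P'.Nodup) (hP'len : P'.length = k + 1)
    (hdisj : P'.Disjoint (p.drop (r - k))) :
    P'.Disjoint ((p.drop (k + 1)).take (r - (2 * k + 1))) ∧
    List.Chain' E (P' ++ p.drop (k + 1)) ∧
    (P' ++ p.drop (k + 1)).head? = some s ∧
    (P' ++ p.drop (k + 1)).getLast? = some t ∧
    (P' ++ p.drop (k + 1)).Nodup ∧
    (P' ++ p.drop (k + 1)).length = r + 1 := by
  have hp : IsSimplePath E s t p := ⟨hpath, hhead, hlast, hnodup⟩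
  have hP' : IsSimplePath E s (p[k]'(by omega)) P' :=
    ⟨hP'path, hP'head, by simp [hP'last], hP'nodup⟩
  have hsplit : p.drop (k + 1) = (p.drop (k + 1)).take (r - (2 * k + 1)) ++ p.drop (r - k) := by
    conv_lhs => rw [← List.take_append_drop (r - (2 * k + 1)) (p.drop (k + 1))]
    rw [List.drop_drop]
    congr 2
    omega
  have hsuffix : IsSimplePath E (p[k + 1]'(by omega)) t (p.drop (k + 1)) := hp.drop _
  have hR := hP'.disjoint_of_forall_le_length (fun q hq => hmin q hq.1 hq.2.1 hq.2.2.1 hq.2.2.2)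
    (hsplit ▸ hsuffix) hdisj (by simp only [List.length_drop]; omega)
    (by rw [← hsplit]; simp only [List.length_drop]; omega)
  obtain ⟨hchain, hhead', hlast', hnodup'⟩ := hP'.append hsuffix (hpath.getElem k (by omega))
    (hsplit ▸ List.disjoint_append_right.2 ⟨hR, hdisj⟩)
  refine ⟨hR, hchain, hhead', hlast', hnodup', ?_⟩
  simp only [List.length_append, List.length_drop]
  omega
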